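/- Let M(v) = (2π)^{-3/2} exp(−|v|²/2) be the normalized Maxwellian on ℝ³, and let g : ℝ³ → ℝ be measurable with ∫_{ℝ³} |v_z| g(v)² M(v) dv < ∞. Suppose g satisfies the diffuse reflection condition g(v) = β for almost every v with v_z > 0, where β = √(2π) ∫_{w_z < 0} |w_z| g(w) M(w) dw. Then −∫_{ℝ³} v_z g(v)² M(v) dv = ∫_{v_z < 0} |v_z| (g(v) − β)² M(v) dv; in particular ∫_{ℝ³} v_z g(v)² M(v) dv ≤ 0. -/

import Mathlib

/-!
Split `∫ v_z g² M` at the wall. Outgoing velocities contribute `−∫_{v_z<0} |v_z| g² M`. On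
incoming velocities `g = β`, so they contribute `β² ∫_{v_z>0} v_z M = β² m`, where
`m = ∫_{v_z<0} |v_z| M`, because the Maxwellian carries no net flux. Expanding `(g − β)²` on
the outgoing half and using `β m = ∫_{v_z<0} |v_z| g M` (the definition of `β`, as
`√(2π) m = 1`) gives the identity. Only these two moments of `M` enter, so the identity holds
for any weight `w ≥ 0` and normal velocity `ζ` with `∫ ζ w = 0`.
-/

open Set MeasureTheory

/-- The normalized Maxwellian `M(v) = (2π)^{-3/2} exp(−|v|²/2)` on `ℝ³`. -/
noncomputable def Maxw (v : ℝ × ℝ × ℝ) : ℝ :=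
  (2 * Real.pi) ^ (-(3:ℝ) / 2) * Real.exp (-(v.1 ^ 2 + v.2.1 ^ 2 + v.2.2 ^ 2) / 2)

open Real ProbabilityTheory

section DiffuseReflection

variable {α : Type*} [MeasurableSpace α] {μ : Measure α}

theorem setIntegral_abs_mul_of_neg {ζ : α → ℝ} (hζ : Measurable ζ) (f : α → ℝ) :
    ∫ x in {x | ζ x < 0}, |ζ x| * f x ∂μ = -∫ x in {x | ζ x < 0}, ζ x * f x ∂μ := by
  rw [← integral_neg]
  refine setIntegral_congr_fun (measurableSet_lt hζ measurable_const) fun x hx => ?_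
  rw [abs_of_neg hx]; ring

theorem integrable_mul_of_integrable_mul_sq {w g : α → ℝ} (hw : 0 ≤ w)
    (hg : AEStronglyMeasurable g μ) (h1 : Integrable w μ)
    (h2 : Integrable (fun x => w x * g x ^ 2) μ) :
    Integrable (fun x => w x * g x) μ := by
  refine ((h1.add h2).div_const 2).mono' (h1.aestronglyMeasurable.mul hg) (ae_of_all _ fun x => ?_)
  have h_sq : w x * (|g x| - 1) ^ 2 = w x + w x * g x ^ 2 - 2 * (w x * |g x|) := by
    rw [← sq_abs (g x)]; ring
  rw [Real.norm_eq_abs, abs_mul, abs_of_nonneg (hw x), Pi.add_apply]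
  linarith [mul_nonneg (hw x) (sq_nonneg (|g x| - 1))]

theorem setIntegral_compl_mul_sq_mul_eq_sq_mul_of_zero_flux {ζ w g : α → ℝ} {β : ℝ}
    (hζ : Measurable ζ) (hζw : Integrable (fun x => ζ x * w x) μ)
    (hflux : ∫ x, ζ x * w x ∂μ = 0) (hrefl : ∀ᵐ x ∂μ, 0 < ζ x → g x = β) :
    ∫ x in {x | ζ x < 0}ᶜ, ζ x * g x ^ 2 * w x ∂μ =
      β ^ 2 * ∫ x in {x | ζ x < 0}, |ζ x| * w x ∂μ := by
  have hs : MeasurableSet {x | ζ x < 0} := measurableSet_lt hζ measurable_const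
  have h_wall : ∫ x in {x | ζ x < 0}ᶜ, ζ x * w x ∂μ = ∫ x in {x | ζ x < 0}, |ζ x| * w x ∂μ := by
    have h_split := integral_add_compl hs hζw
    rw [setIntegral_abs_mul_of_neg hζ]
    linarith
  rw [← h_wall, ← integral_const_mul]
  refine setIntegral_congr_ae hs.compl ?_
  filter_upwards [hrefl] with x hx hxs
  have hx0 : 0 ≤ ζ x := not_lt.mp hxs
  rcases hx0.lt_or_eq with hpos | hzero
  · rw [hx hpos]; ring
  · rw [← hzero]; ring

theorem neg_integral_mul_sq_mul_eq_of_diffuse {ζ w g : α → ℝ} {β : ℝ} (hζ : Measurable ζ)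
    (hg : AEStronglyMeasurable g μ) (hw : 0 ≤ w)
    (hζw : Integrable (fun x => ζ x * w x) μ)
    (hint : Integrable (fun x => |ζ x| * g x ^ 2 * w x) μ)
    (hflux : ∫ x, ζ x * w x ∂μ = 0)
    (hβ : β * ∫ x in {x | ζ x < 0}, |ζ x| * w x ∂μ =
      ∫ x in {x | ζ x < 0}, |ζ x| * g x * w x ∂μ)
    (hrefl : ∀ᵐ x ∂μ, 0 < ζ x → g x = β) :
    -∫ x, ζ x * g x ^ 2 * w x ∂μ = ∫ x in {x | ζ x < 0}, |ζ x| * (g x - β) ^ 2 * w x ∂μ := by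
  set s := {x | ζ x < 0}
  have hs : MeasurableSet s := measurableSet_lt hζ measurable_const
  have habs : Integrable (fun x => |ζ x| * w x) μ :=
    hζw.abs.congr (ae_of_all _ fun x => by simp only [abs_mul, abs_of_nonneg (hw x)])
  have hgw : Integrable (fun x => |ζ x| * g x * w x) μ := by
    have := integrable_mul_of_integrable_mul_sq (fun x => mul_nonneg (abs_nonneg (ζ x)) (hw x))
      hg habs (hint.congr (ae_of_all _ fun x => by ring))
    exact this.congr (ae_of_all _ fun x => by ring)
  have hint' : Integrable (fun x => ζ x * g x ^ 2 * w x) μ := by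
    refine hint.mono' ((hζw.aestronglyMeasurable.mul (hg.pow 2)).congr
      (ae_of_all _ fun x => by simp only [Pi.mul_apply, Pi.pow_apply]; ring))
      (ae_of_all _ fun x => ?_)
    rw [Real.norm_eq_abs, abs_mul, abs_mul, abs_of_nonneg (sq_nonneg (g x)), abs_of_nonneg (hw x)]
  have h_out : ∫ x in s, ζ x * g x ^ 2 * w x ∂μ = -∫ x in s, |ζ x| * g x ^ 2 * w x ∂μ := by
    simp only [mul_assoc]
    rw [setIntegral_abs_mul_of_neg hζ, neg_neg]
  have h_in := setIntegral_compl_mul_sq_mul_eq_sq_mul_of_zero_flux hζ hζw hflux hrefl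
  have h_rhs : ∫ x in s, |ζ x| * (g x - β) ^ 2 * w x ∂μ =
      ∫ x in s, |ζ x| * g x ^ 2 * w x ∂μ - 2 * β * ∫ x in s, |ζ x| * g x * w x ∂μ +
        β ^ 2 * ∫ x in s, |ζ x| * w x ∂μ := by
    calc ∫ x in s, |ζ x| * (g x - β) ^ 2 * w x ∂μ
        = ∫ x in s, (|ζ x| * g x ^ 2 * w x - 2 * β * (|ζ x| * g x * w x)) +
            β ^ 2 * (|ζ x| * w x) ∂μ := by
          congr 1; funext x; ring
      _ = _ := by
          have h_int : IntegrableOn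
              (fun x => |ζ x| * g x ^ 2 * w x - 2 * β * (|ζ x| * g x * w x)) s μ :=
            hint.integrableOn.sub (hgw.integrableOn.const_mul _)
          rw [integral_add h_int (habs.integrableOn.const_mul _),
            integral_sub hint.integrableOn (hgw.integrableOn.const_mul _),
            integral_const_mul, integral_const_mul]
  rw [← integral_add_compl hs hint', h_out, h_in, h_rhs, ← hβ]
  ring

end DiffuseReflection

theorem integral_Ioi_mul_exp_neg_half_sq : ∫ z in Ioi (0:ℝ), z * rexp (-(1 / 2) * z ^ 2) = 1 := by
  have h := integral_mul_cexp_neg_mul_sq (b := (1 / 2 : ℂ)) (by norm_num)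
  norm_num at h
  rw [← Complex.ofReal_inj, ← integral_complex_ofReal, Complex.ofReal_one, ← h]
  congr 1; funext z; push_cast; ring_nf

theorem gaussianPDFReal_zero_one (z : ℝ) :
    gaussianPDFReal 0 1 z = (√(2 * π))⁻¹ * rexp (-(1 / 2) * z ^ 2) := by
  rw [gaussianPDFReal]; ring_nf; simp

theorem integrable_mul_gaussianPDFReal : Integrable (fun z : ℝ => z * gaussianPDFReal 0 1 z) :=
  ((integrable_mul_exp_neg_mul_sq (by norm_num : (0:ℝ) < 1 / 2)).const_mul (√(2 * π))⁻¹).congr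
    (ae_of_all _ fun z => by simp only [gaussianPDFReal_zero_one]; ring)

theorem integral_Iio_abs_mul_gaussianPDFReal :
    ∫ z in Iio (0:ℝ), |z| * gaussianPDFReal 0 1 z = (√(2 * π))⁻¹ := by
  have h_refl := integral_comp_neg_Ioi 0 (fun z => |z| * gaussianPDFReal 0 1 z)
  rw [neg_zero, integral_Iic_eq_integral_Iio] at h_refl
  rw [← h_refl]
  calc ∫ z in Ioi (0:ℝ), |-z| * gaussianPDFReal 0 1 (-z)
      = ∫ z in Ioi (0:ℝ), (√(2 * π))⁻¹ * (z * rexp (-(1 / 2) * z ^ 2)) := by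
        refine setIntegral_congr_fun measurableSet_Ioi fun z hz => ?_
        rw [gaussianPDFReal_zero_one, abs_neg, abs_of_pos hz, neg_sq]; ring
    _ = (√(2 * π))⁻¹ := by
        rw [integral_const_mul, integral_Ioi_mul_exp_neg_half_sq, mul_one]

theorem maxw_eq_mul_gaussianPDFReal (v : ℝ × ℝ × ℝ) :
    Maxw v = gaussianPDFReal 0 1 v.1 * (gaussianPDFReal 0 1 v.2.1 * gaussianPDFReal 0 1 v.2.2) := by
  have hc : (2 * π) ^ (-(3:ℝ) / 2) = (√(2 * π))⁻¹ ^ 3 := by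
    rw [sqrt_eq_rpow, ← rpow_neg (by positivity), ← rpow_natCast, ← rpow_mul (by positivity)]
    norm_num
  simp only [Maxw, gaussianPDFReal, hc, NNReal.coe_one, mul_one, sub_zero]
  rw [show -(v.1 ^ 2 + v.2.1 ^ 2 + v.2.2 ^ 2) / 2 = -v.1 ^ 2 / 2 + (-v.2.1 ^ 2 / 2 + -v.2.2 ^ 2 / 2)
    by ring, exp_add, exp_add]
  ring

theorem maxw_pos (v : ℝ × ℝ × ℝ) : 0 < Maxw v := by
  rw [Maxw]; positivity

theorem integrable_comp_snd_snd_mul_maxw {h : ℝ → ℝ}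
    (hh : Integrable (fun z => h z * gaussianPDFReal 0 1 z)) :
    Integrable (fun v : ℝ × ℝ × ℝ => h v.2.2 * Maxw v) := by
  have hφ := integrable_gaussianPDFReal 0 1
  exact (hφ.mul_prod (hφ.mul_prod hh)).congr
    (ae_of_all _ fun v => by simp only [maxw_eq_mul_gaussianPDFReal]; ring)

theorem integral_comp_snd_snd_mul_maxw (h : ℝ → ℝ) :
    ∫ v : ℝ × ℝ × ℝ, h v.2.2 * Maxw v = ∫ z, h z * gaussianPDFReal 0 1 z := by
  have hφ := integral_gaussianPDFReal_eq_one 0 one_ne_zero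
  calc ∫ v : ℝ × ℝ × ℝ, h v.2.2 * Maxw v
      = ∫ v : ℝ × ℝ × ℝ, gaussianPDFReal 0 1 v.1 *
          (gaussianPDFReal 0 1 v.2.1 * (h v.2.2 * gaussianPDFReal 0 1 v.2.2)) := by
        congr 1; funext v; rw [maxw_eq_mul_gaussianPDFReal]; ring
    _ = (∫ x, gaussianPDFReal 0 1 x) *
          ((∫ y, gaussianPDFReal 0 1 y) * ∫ z, h z * gaussianPDFReal 0 1 z) :=
        (integral_prod_mul (gaussianPDFReal 0 1) fun q : ℝ × ℝ =>
          gaussianPDFReal 0 1 q.1 * (h q.2 * gaussianPDFReal 0 1 q.2)).trans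
          (congrArg _ (integral_prod_mul _ fun z => h z * gaussianPDFReal 0 1 z))
    _ = ∫ z, h z * gaussianPDFReal 0 1 z := by
        rw [hφ, one_mul, one_mul]

theorem integral_snd_snd_mul_maxw : ∫ v : ℝ × ℝ × ℝ, v.2.2 * Maxw v = 0 := by
  have hmean := integral_gaussianReal_eq_integral_smul (μ := 0) (f := fun x => x) one_ne_zero
  rw [integral_id_gaussianReal] at hmean
  calc ∫ v : ℝ × ℝ × ℝ, v.2.2 * Maxw v = ∫ z, z * gaussianPDFReal 0 1 z :=
        integral_comp_snd_snd_mul_maxw fun z => z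
    _ = ∫ z, gaussianPDFReal 0 1 z • z := by
        congr 1; funext z; exact mul_comm _ _
    _ = 0 := hmean.symm

theorem setIntegral_abs_snd_snd_mul_maxw :
    ∫ v in {v : ℝ × ℝ × ℝ | v.2.2 < 0}, |v.2.2| * Maxw v = (√(2 * π))⁻¹ := by
  have hs : MeasurableSet {v : ℝ × ℝ × ℝ | v.2.2 < 0} :=
    measurableSet_lt measurable_snd.snd measurable_const
  rw [← integral_indicator hs, ← integral_Iio_abs_mul_gaussianPDFReal,
    ← integral_indicator measurableSet_Iio]
  simp_rw [indicator_mul_left]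
  refine (integral_congr_ae (ae_of_all _ fun v => ?_)).trans
    (integral_comp_snd_snd_mul_maxw ((Iio 0).indicator abs))
  by_cases hv : v.2.2 < 0 <;> simp [hv]

/-- Darrozès–Guiraud type identity for diffuse reflection at the boundary `z = 0`:
if `g = β` for a.e. incoming velocity (`v_z > 0`), where
`β = √(2π) ∫_{w_z<0} |w_z| g(w) M(w) dw`, then
`−∫ v_z g² M dv = ∫_{v_z<0} |v_z| (g − β)² M dv ≥ 0`. -/
theorem diffuse_reflection_energy_identity
    (g : ℝ × ℝ × ℝ → ℝ) (hg : Measurable g)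
    (hint : Integrable (fun v : ℝ × ℝ × ℝ => |v.2.2| * (g v) ^ 2 * Maxw v))
    (β : ℝ)
    (hβ : β = Real.sqrt (2 * Real.pi) *
      ∫ w in {w : ℝ × ℝ × ℝ | w.2.2 < 0}, |w.2.2| * g w * Maxw w)
    (hrefl : ∀ᵐ v : ℝ × ℝ × ℝ, 0 < v.2.2 → g v = β) :
    (-(∫ v : ℝ × ℝ × ℝ, v.2.2 * (g v) ^ 2 * Maxw v) =
      ∫ v in {v : ℝ × ℝ × ℝ | v.2.2 < 0}, |v.2.2| * (g v - β) ^ 2 * Maxw v) ∧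
    (∫ v : ℝ × ℝ × ℝ, v.2.2 * (g v) ^ 2 * Maxw v) ≤ 0 := by
  have hbalance : β * ∫ v in {v : ℝ × ℝ × ℝ | v.2.2 < 0}, |v.2.2| * Maxw v =
      ∫ v in {v : ℝ × ℝ × ℝ | v.2.2 < 0}, |v.2.2| * g v * Maxw v := by
    rw [setIntegral_abs_snd_snd_mul_maxw, hβ]
    field_simp
  have h_identity := neg_integral_mul_sq_mul_eq_of_diffuse measurable_snd.snd
    hg.aestronglyMeasurable (fun v => (maxw_pos v).le)
    (integrable_comp_snd_snd_mul_maxw (h := fun z => z) integrable_mul_gaussianPDFReal) hint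
    integral_snd_snd_mul_maxw hbalance hrefl
  refine ⟨h_identity, neg_nonneg.mp (h_identity ▸ setIntegral_nonneg ?_ fun v _ => ?_)⟩
  · exact measurableSet_lt measurable_snd.snd measurable_const
  · have := maxw_pos v
    positivity
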